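/- arXiv:1002.1624 — 2 statements merged into one kernel-verified Lean document; each statement's English description precedes it below -/
import Mathlib

section
/- If P and Q are scattered countable linear orderings of Hausdorff ranks α and β respectively, then the lexicographic product Q × P (ordered by (q,p) < (q',p') iff p < p', or p = p' and q < q') is scattered of rank at most β + α. -/
/-- A linear(ish) ordering `(σ, r)` is scattered if it has no dense subordering:
no subset `S` with at least two comparable points such that between any two
`r`-related points of `S` there is a third point of `S`. -/
def ScatteredRel (σ : Type) (r : σ → σ → Prop) : Prop :=
  ¬ ∃ S : Set σ, (∃ a ∈ S, ∃ b ∈ S, r a b) ∧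
      ∀ a ∈ S, ∀ b ∈ S, r a b → ∃ c ∈ S, r a c ∧ r c b

/-- Hausdorff's hierarchy: `InV a σ r` means the ordering `(σ, r)` belongs to the
class `V_a`, where `V_0` consists of the empty and one-point orderings and `V_a`
consists of all orderings isomorphic to a `ℤ`-indexed sum of orderings from
`⋃_{b < a} V_b`. -/
inductive InV : Ordinal.{0} → ∀ (σ : Type), (σ → σ → Prop) → Prop
  | zero (σ : Type) (r : σ → σ → Prop) : Subsingleton σ → InV 0 σ r
  | sum (a : Ordinal.{0}) (Q : ℤ → Type) (rQ : ∀ n, Q n → Q n → Prop)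
      (o : ℤ → Ordinal.{0}) (ho : ∀ n, o n < a)
      (h : ∀ n, InV (o n) (Q n) (rQ n))
      (σ : Type) (r : σ → σ → Prop) (e : (Σ n : ℤ, Q n) ≃ σ)
      (he : ∀ x y, Sigma.Lex (· < ·) rQ x y ↔ r (e x) (e y)) :
      InV a σ r

/-- The Hausdorff rank of an ordering: the least ordinal `a` with `(σ, r) ∈ V_a`. -/
noncomputable def hrank (σ : Type) (r : σ → σ → Prop) : Ordinal.{0} :=
  sInf {a | InV a σ r}

/-- The lexicographic product order on `Q × P`: `(q,p) < (q',p')` iff `p < p'`,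
or `p = p'` and `q < q'`. -/
def prodLexRel (Q P : Type) [LinearOrder Q] [LinearOrder P] :
    Q × P → Q × P → Prop :=
  fun a b => a.2 < b.2 ∨ (a.2 = b.2 ∧ a.1 < b.1)

/-! ### Auxiliary lemmas -/

/-- `InV` transfers along relation-preserving equivalences. -/
lemma InV.congr {a : Ordinal.{0}} {σ : Type} {r : σ → σ → Prop}
    (h : InV a σ r) (τ : Type) (r' : τ → τ → Prop) (e : σ ≃ τ)
    (hc : ∀ x y, r x y ↔ r' (e x) (e y)) : InV a τ r' := by
  cases h with
  | zero σ r hs => exact InV.zero τ r' (e.symm.injective.comp (fun _ _ h => h) |>.subsingleton)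
  | sum a Qn rQn o ho h σ r e0 he0 =>
    exact InV.sum a Qn rQn o ho h τ r' (e0.trans e)
      (fun x y => (he0 x y).trans (hc _ _))

/-- `InV` classes are increasing in the ordinal. -/
lemma InV.mono {a : Ordinal.{0}} {σ : Type} {r : σ → σ → Prop}
    (h : InV a σ r) {a' : Ordinal.{0}} (ha : a ≤ a') : InV a' σ r := by
  cases h with
  | zero σ r hs =>
    rcases eq_or_lt_of_le (zero_le : (0 : Ordinal.{0}) ≤ a') with h0 | h0
    · exact h0 ▸ InV.zero σ r hs
    · refine InV.sum a' (fun n => {x : σ // n = 0}) (fun n x y => r x.1 y.1)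
        (fun _ => 0) (fun _ => h0)
        (fun n => InV.zero _ _ ⟨fun x y => Subtype.ext (Subsingleton.elim _ _)⟩)
        σ r ⟨fun x => x.2.1, fun x => ⟨0, x, rfl⟩, ?_, fun x => rfl⟩ ?_
      · rintro ⟨n, x, hn⟩; subst hn; rfl
      · rintro ⟨n, x, hn⟩ ⟨m, y, hm⟩
        subst hn; subst hm
        constructor
        · intro hl
          cases hl with
          | left _ _ h => exact absurd h (lt_irrefl _)
          | right _ _ h => exact h
        · intro h; exact Sigma.Lex.right _ _ h
  | sum a Qn rQn o ho h σ r e he =>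
    exact InV.sum a' Qn rQn o (fun n => lt_of_lt_of_le (ho n) ha) h σ r e he

/-- A same-index `Sigma.Lex` fact. -/
lemma sigma_lex_same {Qn : ℤ → Type} {rQn : ∀ n, Qn n → Qn n → Prop}
    {n : ℤ} {x y : Qn n} :
    Sigma.Lex (· < ·) rQn ⟨n, x⟩ ⟨n, y⟩ ↔ rQn n x y := by
  constructor
  · intro hl
    cases hl with
    | left _ _ h => exact absurd h (lt_irrefl _)
    | right _ _ h => exact h
  · exact Sigma.Lex.right _ _

/-- `InV` is (weakly) preserved by passing to suborderings. -/
lemma InV.embed : ∀ (a : Ordinal.{0}) (σ : Type) (r : σ → σ → Prop), InV a σ r →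
    ∀ (τ : Type) (r' : τ → τ → Prop) (f : τ → σ), Function.Injective f →
    (∀ x y, r' x y ↔ r (f x) (f y)) → ∃ b ≤ a, InV b τ r' := by
  intro a σ r h
  induction h with
  | zero σ r hs =>
    intro τ r' f hf hc
    exact ⟨0, le_rfl, InV.zero τ r' ⟨fun x y => hf (Subsingleton.elim _ _)⟩⟩
  | sum a Qn rQn o ho h σ r e he IH =>
    intro τ r' f hf hc
    set g : τ → Σ n, Qn n := fun t => e.symm (f t) with hgdef
    have hginj : Function.Injective g := fun s t hst => hf (e.symm.injective hst)
    have hgc : ∀ x y, r' x y ↔ Sigma.Lex (· < ·) rQn (g x) (g y) := by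
      intro x y
      rw [hc, he]
      simp [g]
    have key : ∀ (x : Σ n, Qn n) (n : ℤ) (h : x.1 = n), x = ⟨n, h ▸ x.2⟩ := by
      rintro ⟨m, q⟩ n h; cases h; rfl
    -- components
    let τn : ℤ → Type := fun n => {t : τ // (g t).1 = n}
    let fn : ∀ n, τn n → Qn n := fun n t => t.2 ▸ (g t.1).2
    have hgn : ∀ n (t : τn n), g t.1 = ⟨n, fn n t⟩ := fun n t => key (g t.1) n t.2
    have hfninj : ∀ n, Function.Injective (fn n) := by
      intro n s t hst
      have : g s.1 = g t.1 := by rw [hgn n s, hgn n t, hst]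
      exact Subtype.ext (hginj this)
    have hfnc : ∀ n (s t : τn n), r' s.1 t.1 ↔ rQn n (fn n s) (fn n t) := by
      intro n s t
      rw [hgc, hgn n s, hgn n t, sigma_lex_same]
    choose b hble hbV using fun n => IH n (τn n) (fun s t => r' s.1 t.1) (fn n)
      (hfninj n) (hfnc n)
    refine ⟨a, le_rfl, InV.sum a τn _ b (fun n => lt_of_le_of_lt (hble n) (ho n)) hbV
      τ r' ⟨fun x => x.2.1, fun t => ⟨(g t).1, t, rfl⟩, ?_, fun t => rfl⟩ ?_⟩
    · rintro ⟨n, t, ht⟩; dsimp; subst ht; rfl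
    · rintro ⟨n, t, ht⟩ ⟨m, s, hs⟩
      show Sigma.Lex _ _ _ _ ↔ r' t s
      rw [hgc t s, hgn n ⟨t, ht⟩, hgn m ⟨s, hs⟩]
      constructor
      · intro hl
        cases hl with
        | left _ _ h => exact Sigma.Lex.left _ _ h
        | right _ _ h => exact Sigma.Lex.right _ _ ((hfnc _ _ _).mp h)
      · intro hl
        cases hl with
        | left _ _ h => exact Sigma.Lex.left _ _ h
        | right _ _ h => exact Sigma.Lex.right _ _ ((hfnc _ _ _).mpr h)

/-- The key lemma: the lexicographic product of orderings in `V_a` and `V_b`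
lies in `V_{b+a}`. -/
lemma InV.prod : ∀ (a : Ordinal.{0}) (P : Type) (rP : P → P → Prop), InV a P rP →
    Irreflexive rP → ∀ (b : Ordinal.{0}) (Q : Type) (rQ : Q → Q → Prop), InV b Q rQ →
    InV (b + a) (Q × P) (fun x y => rP x.2 y.2 ∨ (x.2 = y.2 ∧ rQ x.1 y.1)) := by
  intro a P rP h
  induction h with
  | zero P rP hs =>
    intro hirr b Q rQ hQ
    rw [add_zero]
    rcases isEmpty_or_nonempty P with hE | hN
    · have : Subsingleton (Q × P) := ⟨fun x _ => (hE.false x.2).elim⟩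
      exact (InV.zero _ _ this).mono (zero_le : (0 : Ordinal.{0}) ≤ b)
    · obtain ⟨p0⟩ := hN
      refine hQ.congr (Q × P) _ ⟨fun q => (q, p0), Prod.fst, fun q => rfl,
        fun x => Prod.ext rfl (Subsingleton.elim _ _)⟩ ?_
      intro q q'
      constructor
      · intro h; exact Or.inr ⟨rfl, h⟩
      · rintro (h | ⟨_, h⟩)
        · exact absurd h (hirr p0)
        · exact h
  | sum a Pn rPn o ho h P rP e he IH =>
    intro hirr b Q rQ hQ
    have hirrn : ∀ n, Irreflexive (rPn n) := fun n p hp =>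
      hirr _ ((he ⟨n, p⟩ ⟨n, p⟩).mp (Sigma.Lex.right _ _ hp))
    refine InV.sum (b + a) (fun n => Q × Pn n)
      (fun n x y => rPn n x.2 y.2 ∨ (x.2 = y.2 ∧ rQ x.1 y.1))
      (fun n => b + o n) (fun n => (add_lt_add_iff_left b).mpr (ho n))
      (fun n => IH n (hirrn n) b Q rQ hQ)
      (Q × P) _
      ⟨fun x => (x.2.1, e ⟨x.1, x.2.2⟩),
       fun y => ⟨(e.symm y.2).1, (y.1, (e.symm y.2).2)⟩, ?_, ?_⟩ ?_
    · rintro ⟨n, q, p⟩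
      have h0 : e.symm (e ⟨n, p⟩) = ⟨n, p⟩ := e.symm_apply_apply _
      dsimp only
      rw [h0]
    · rintro ⟨q, p⟩; simp
    · rintro ⟨n, q, p⟩ ⟨m, q', p'⟩
      show Sigma.Lex _ _ _ _ ↔ (rP (e ⟨n, p⟩) (e ⟨m, p'⟩) ∨ (e ⟨n, p⟩ = e ⟨m, p'⟩ ∧ rQ q q'))
      rw [← he, Equiv.apply_eq_iff_eq]
      constructor
      · intro hl
        cases hl with
        | left _ _ h => exact Or.inl (Sigma.Lex.left _ _ h)
        | right _ _ h =>
          rcases h with h | ⟨h1, h2⟩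
          · exact Or.inl (Sigma.Lex.right _ _ h)
          · dsimp at h1; subst h1; exact Or.inr ⟨rfl, h2⟩
      · rintro (hl | ⟨heq, hq⟩)
        · cases hl with
          | left _ _ h => exact Sigma.Lex.left _ _ h
          | right _ _ h => exact Sigma.Lex.right _ _ (Or.inl h)
        · cases heq
          exact Sigma.Lex.right _ _ (Or.inr ⟨rfl, hq⟩)

/-- If `P` and `Q` are scattered countable linear orderings of Hausdorff ranks `α`
and `β`, then the lexicographic product `Q × P` is scattered of rank at most
`β + α`. -/
theorem hrank_prod (P Q : Type) [LinearOrder P] [LinearOrder Q]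
    [Countable P] [Countable Q]
    (hP : ScatteredRel P (· < ·)) (hQ : ScatteredRel Q (· < ·))
    (α β : Ordinal.{0}) (hα : hrank P (· < ·) = α) (hβ : hrank Q (· < ·) = β) :
    ScatteredRel (Q × P) (prodLexRel Q P) ∧
    hrank (Q × P) (prodLexRel Q P) ≤ β + α := by
  constructor
  · -- scatteredness
    rintro ⟨S, ⟨x, hxS, y, hyS, hxy⟩, hdense⟩
    by_cases hfib : ∃ p q q', (q, p) ∈ S ∧ (q', p) ∈ S ∧ q < q'
    · obtain ⟨p, q, q', hq, hq', hlt⟩ := hfib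
      apply hQ
      refine ⟨{u | (u, p) ∈ S}, ⟨q, hq, q', hq', hlt⟩, ?_⟩
      intro u hu v hv huv
      obtain ⟨c, hcS, h1, h2⟩ := hdense (u, p) hu (v, p) hv (Or.inr ⟨rfl, huv⟩)
      have hc2 : c.2 = p := by
        rcases h1 with h1 | ⟨h1, _⟩
        · rcases h2 with h2 | ⟨h2, _⟩
          · exact absurd (h1.trans h2) (lt_irrefl p)
          · exact absurd (lt_of_lt_of_le h1 (le_of_eq h2)) (lt_irrefl p)
        · exact h1.symm
      have hu1 : u < c.1 := by
        rcases h1 with h1 | ⟨_, h1⟩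
        · exact absurd (lt_of_lt_of_le h1 (le_of_eq hc2)) (lt_irrefl p)
        · exact h1
      have hv1 : c.1 < v := by
        rcases h2 with h2 | ⟨_, h2⟩
        · exact absurd (lt_of_le_of_lt hc2.ge h2) (lt_irrefl p)
        · exact h2
      refine ⟨c.1, ?_, hu1, hv1⟩
      show (c.1, p) ∈ S
      rwa [← hc2, Prod.mk.eta]
    · push_neg at hfib
      apply hP
      refine ⟨{p | ∃ q, (q, p) ∈ S}, ⟨x.2, ⟨x.1, by rwa [Prod.mk.eta]⟩,
        y.2, ⟨y.1, by rwa [Prod.mk.eta]⟩, ?_⟩, ?_⟩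
      · rcases hxy with h | ⟨h1, h2⟩
        · exact h
        · exact absurd h2 (by
            have hx' : (x.1, x.2) ∈ S := by rwa [Prod.mk.eta]
            have hy' : (y.1, x.2) ∈ S := by rw [h1, Prod.mk.eta]; exact hyS
            exact not_lt.mpr (hfib x.2 x.1 y.1 hx' hy'))
      · rintro u ⟨qu, hqu⟩ v ⟨qv, hqv⟩ huv
        obtain ⟨c, hcS, h1, h2⟩ := hdense (qu, u) hqu (qv, v) hqv (Or.inl huv)
        have hc' : (c.1, c.2) ∈ S := by rwa [Prod.mk.eta]
        have hu1 : u < c.2 := by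
          rcases h1 with h1 | ⟨h1, h1'⟩
          · exact h1
          · have h1'' : u = c.2 := h1
            have hcu : (c.1, u) ∈ S := by rw [h1'']; exact hc'
            exact absurd h1' (not_lt.mpr (hfib u qu c.1 hqu hcu))
        have hv1 : c.2 < v := by
          rcases h2 with h2 | ⟨h2, h2'⟩
          · exact h2
          · have h2'' : c.2 = v := h2
            have hcv : (c.1, v) ∈ S := by rw [← h2'']; exact hc'
            exact absurd h2' (not_lt.mpr (hfib v c.1 qv hcv hqv))
        exact ⟨c.2, ⟨c.1, hc'⟩, hu1, hv1⟩
  · -- rank bound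
    by_cases hpq : {a | InV a (Q × P) (prodLexRel Q P)}.Nonempty
    swap
    · rw [hrank, Set.not_nonempty_iff_eq_empty.mp hpq, Ordinal.sInf_empty]
      exact zero_le
    rcases isEmpty_or_nonempty P with hPe | hPn
    · have : Subsingleton (Q × P) := ⟨fun a _ => (hPe.false a.2).elim⟩
      calc hrank (Q × P) (prodLexRel Q P) ≤ 0 := csInf_le' (InV.zero _ _ this)
        _ ≤ β + α := zero_le
    rcases isEmpty_or_nonempty Q with hQe | hQn
    · have : Subsingleton (Q × P) := ⟨fun a _ => (hQe.false a.1).elim⟩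
      calc hrank (Q × P) (prodLexRel Q P) ≤ 0 := csInf_le' (InV.zero _ _ this)
        _ ≤ β + α := zero_le
    obtain ⟨p0⟩ := hPn
    obtain ⟨q0⟩ := hQn
    have hVpq : InV (hrank (Q × P) (prodLexRel Q P)) (Q × P) (prodLexRel Q P) :=
      csInf_mem hpq
    -- P and Q embed into Q × P, hence their InV classes are nonempty
    have hcp : ∀ p p' : P, p < p' ↔ prodLexRel Q P (q0, p) (q0, p') := by
      intro p p'
      constructor
      · intro h; exact Or.inl h
      · rintro (h | ⟨h, h'⟩)
        · exact h
        · exact absurd h' (lt_irrefl q0)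
    have hcq : ∀ q q' : Q, q < q' ↔ prodLexRel Q P (q, p0) (q', p0) := by
      intro q q'
      constructor
      · intro h; exact Or.inr ⟨rfl, h⟩
      · rintro (h | ⟨_, h⟩)
        · exact absurd h (lt_irrefl p0)
        · exact h
    have hSp : {a | InV a P (· < ·)}.Nonempty := by
      obtain ⟨b, _, hb⟩ := InV.embed _ _ _ hVpq P (· < ·) (fun p => (q0, p))
        (fun p p' h => (Prod.ext_iff.mp h).2) hcp
      exact ⟨b, hb⟩
    have hSq : {a | InV a Q (· < ·)}.Nonempty := by
      obtain ⟨b, _, hb⟩ := InV.embed _ _ _ hVpq Q (· < ·) (fun q => (q, p0))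
        (fun q q' h => (Prod.ext_iff.mp h).1) hcq
      exact ⟨b, hb⟩
    have hVp : InV α P (· < ·) := by rw [← hα]; exact csInf_mem hSp
    have hVq : InV β Q (· < ·) := by rw [← hβ]; exact csInf_mem hSq
    have := InV.prod α P (· < ·) hVp (fun p => lt_irrefl p) β Q (· < ·) hVq
    exact csInf_le' this
end

section
/- Let P_0 be a linear ordering and P, Q ⊆ P_0 scattered suborderings with Hausdorff ranks r(P) = α and r(Q) = β. Then r(P ∪ Q) ≤ min{α + β + m_β, β + α + m_α}, where for an ordinal γ, m_γ is defined by m_0 = 1, m_γ = 1 if γ is a limit, and m_{δ+1} = m_δ + 1. -/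
/-- `mOrd γ` is defined by `mOrd 0 = 1`, `mOrd γ = 1` for limit `γ`, and
`mOrd (δ + 1) = mOrd δ + 1`. -/
noncomputable def mOrd (γ : Ordinal.{0}) : ℕ :=
  Ordinal.limitRecOn γ 1 (fun _ ih => ih + 1) (fun _ _ _ => 1)

-- mOrd lemmas
lemma mOrd_zero : mOrd 0 = 1 := Ordinal.limitRecOn_zero _ _ _

lemma mOrd_succ (s : Ordinal) : mOrd (s + 1) = mOrd s + 1 := by
  rw [mOrd, Ordinal.add_one_eq_succ, Ordinal.limitRecOn_succ]; rfl

lemma mOrd_limit {s : Ordinal} (h : Order.IsSuccLimit s) : mOrd s = 1 :=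
  Ordinal.limitRecOn_limit _ _ _ _ h

lemma mOrd_pos (a : Ordinal) : 1 ≤ mOrd a := by
  induction a using Ordinal.limitRecOn with
  | zero => rw [mOrd_zero]
  | add_one s _ => rw [mOrd_succ]; omega
  | limit s hs _ => rw [mOrd_limit hs]

lemma add_nat_lt_limit {a γ : Ordinal} (h : Order.IsSuccLimit a) (hγ : γ < a) (n : ℕ) :
    γ + (n : Ordinal) < a := by
  induction n with
  | zero => simpa using hγ
  | succ n ih =>
      have : γ + ((n : Ordinal) + 1) < a := by
        rw [← add_assoc, Ordinal.add_one_eq_succ]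
        exact h.succ_lt ih
      simpa [Nat.cast_succ] using this

lemma keyLemma : ∀ (a γ : Ordinal), γ < a → ∀ k : ℕ, mOrd a = k + 1 →
    γ + (mOrd γ : Ordinal) < a + (k : Ordinal) := by
  intro a
  induction a using Ordinal.limitRecOn with
  | zero => intro γ hγ; exact absurd hγ (not_lt_of_ge (zero_le : (0 : Ordinal) ≤ γ))
  | add_one s IH =>
      intro γ hγ k hk
      rw [mOrd_succ] at hk
      have hk' : k = mOrd s := by omega
      subst hk'
      have hγ' : γ ≤ s := by
        rw [Ordinal.add_one_eq_succ, Order.lt_succ_iff] at hγ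
        exact hγ
      rcases eq_or_lt_of_le hγ' with rfl | hlt
      · have step : γ + (mOrd γ : Ordinal) < γ + ((mOrd γ : Ordinal) + 1) := by
          apply add_lt_add_right
          exact_mod_cast Nat.lt_succ_self _
        have eq1 : γ + 1 + ((mOrd γ : Ordinal)) = γ + ((mOrd γ : Ordinal) + 1) := by
          rw [add_assoc]
          congr 1
          have h2 : ((1 + mOrd γ : ℕ) : Ordinal) = ((mOrd γ + 1 : ℕ) : Ordinal) := by
            norm_num [Nat.add_comm]
          push_cast at h2
          exact h2
        rw [eq1]; exact step
      · obtain ⟨k', hk'⟩ : ∃ k', mOrd s = k' + 1 := ⟨mOrd s - 1, by have := mOrd_pos s; omega⟩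
        have h1 := IH γ hlt k' hk'
        have h2 : s + (k' : Ordinal) < s + (mOrd s : Ordinal) := by
          apply add_lt_add_right
          exact_mod_cast (by omega : k' < mOrd s)
        have h3 : s + (mOrd s : Ordinal) ≤ s + 1 + (mOrd s : Ordinal) := by
          apply add_le_add_left
          exact le_self_add
        exact h1.trans (h2.trans_le h3)
  | limit s hs IH =>
      intro γ hγ k hk
      rw [mOrd_limit hs] at hk
      have hk0 : k = 0 := by omega
      subst hk0
      simpa using (add_nat_lt_limit hs hγ (mOrd γ))

-- iso invariance
lemma InV_congr {a : Ordinal} {σ τ : Type} {r : σ → σ → Prop} {r' : τ → τ → Prop}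
    (h : InV a σ r) (e : σ ≃ τ) (he : ∀ x y, r x y ↔ r' (e x) (e y)) : InV a τ r' := by
  cases h with
  | zero _ _ hs => exact InV.zero _ _ (Equiv.subsingleton e.symm)
  | sum a Q rQ o ho h _ _ e0 he0 =>
      exact InV.sum a Q rQ o ho h τ r' (e0.trans e)
        (fun x y => (he0 x y).trans (he _ _))

-- closure under induced suborders
lemma InV_induced {a : Ordinal} {σ : Type} {r : σ → σ → Prop} (h : InV a σ r) :
    ∀ s : Set σ, InV a ↥s (fun x y => r x.1 y.1) := by
  induction h with
  | zero σ r hs =>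
      intro s
      exact InV.zero _ _ ⟨fun x y => Subtype.ext (Subsingleton.elim _ _)⟩
  | sum a Q rQ o ho h σ r e he IH =>
      intro s
      classical
      set sn : ∀ n : ℤ, Set (Q n) := fun n => {y | e ⟨n, y⟩ ∈ s} with hsn
      have hbij : Function.Bijective
          (fun x : (Σ n : ℤ, ↥(sn n)) => (⟨e ⟨x.1, x.2.1⟩, x.2.2⟩ : ↥s)) := by
        constructor
        · rintro ⟨n, y, hy⟩ ⟨m, z, hz⟩ hxy
          have : (⟨n, y⟩ : Σ n, Q n) = ⟨m, z⟩ := e.injective (congrArg Subtype.val hxy)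
          obtain ⟨h1, h2⟩ := Sigma.mk.inj_iff.mp this
          subst h1
          have : y = z := eq_of_heq h2
          subst this
          rfl
        · rintro ⟨x, hx⟩
          refine ⟨⟨(e.symm x).1, (e.symm x).2, ?_⟩, ?_⟩
          · show e ⟨(e.symm x).1, (e.symm x).2⟩ ∈ s
            rw [Sigma.eta, e.apply_symm_apply]; exact hx
          · apply Subtype.ext
            show e ⟨(e.symm x).1, (e.symm x).2⟩ = x
            rw [Sigma.eta, e.apply_symm_apply]
      refine InV.sum a (fun n => ↥(sn n)) (fun n x y => rQ n x.1 y.1) o ho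
        (fun n => IH n (sn n)) _ _ (Equiv.ofBijective _ hbij) ?_
      rintro ⟨n, y⟩ ⟨m, z⟩
      show Sigma.Lex _ _ _ _ ↔ r (e ⟨n, y.1⟩) (e ⟨m, z.1⟩)
      rw [← he]
      constructor
      · intro hl
        cases hl with
        | left _ _ hnm => exact Sigma.Lex.left _ _ hnm
        | right x y hr => exact Sigma.Lex.right _ _ hr
      · intro hr
        cases hr with
        | left _ _ hnm => exact Sigma.Lex.left _ _ hnm
        | right x y h2 => exact Sigma.Lex.right _ _ h2

lemma InV_subset {P₀ : Type} [LinearOrder P₀] {S T : Set P₀} (hTS : T ⊆ S)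
    {a : Ordinal} (h : InV a ↥S (· < ·)) : InV a ↥T (· < ·) := by
  have h1 := InV_induced h {x : ↥S | x.1 ∈ T}
  refine InV_congr h1 ?_ ?_
  · exact ⟨fun x => ⟨x.1.1, x.2⟩, fun x => ⟨⟨x.1, hTS x.2⟩, x.2⟩,
      fun x => by ext; rfl, fun x => by ext; rfl⟩
  · intro x y
    exact Iff.rfl

-- ordered unions over ℤ
lemma InV_iUnion {P₀ : Type} [LinearOrder P₀] (A : ℤ → Set P₀) (a : Ordinal)
    (o : ℤ → Ordinal) (ho : ∀ n, o n < a) (h : ∀ n, InV (o n) ↥(A n) (· < ·))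
    (hord : ∀ m n : ℤ, m < n → ∀ x ∈ A m, ∀ y ∈ A n, x < y) :
    InV a ↥(⋃ n, A n) (· < ·) := by
  classical
  have hbij : Function.Bijective
      (fun x : (Σ n : ℤ, ↥(A n)) => (⟨x.2.1, Set.mem_iUnion.2 ⟨x.1, x.2.2⟩⟩ : ↥(⋃ n, A n))) := by
    constructor
    · rintro ⟨n, y, hy⟩ ⟨m, z, hz⟩ hxy
      have hv : y = z := congrArg Subtype.val hxy
      subst hv
      rcases lt_trichotomy n m with hnm | rfl | hnm
      · exact absurd (hord n m hnm y hy y hz) (lt_irrefl y)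
      · rfl
      · exact absurd (hord m n hnm y hz y hy) (lt_irrefl y)
    · rintro ⟨x, hx⟩
      obtain ⟨n, hn⟩ := Set.mem_iUnion.mp hx
      exact ⟨⟨n, x, hn⟩, rfl⟩
  refine InV.sum a (fun n => ↥(A n)) (fun n x y => x < y) o ho h _ _
    (Equiv.ofBijective _ hbij) ?_
  rintro ⟨n, y⟩ ⟨m, z⟩
  show Sigma.Lex _ _ _ _ ↔ (y : P₀) < z
  constructor
  · intro hl
    cases hl with
    | left _ _ hnm => exact hord _ _ hnm y.1 y.2 z.1 z.2
    | right x y h2 => exact h2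
  · intro hlt
    rcases lt_trichotomy n m with hnm | rfl | hnm
    · exact Sigma.Lex.left _ _ hnm
    · exact Sigma.Lex.right _ _ (show (y : P₀) < z from hlt)
    · exact absurd (hord m n hnm z.1 z.2 y.1 y.2) (not_lt.mpr hlt.le)

lemma InV_empty {P₀ : Type} [LinearOrder P₀] : InV 0 ↥(∅ : Set P₀) (· < ·) :=
  InV.zero _ _ ⟨fun x => absurd x.2 (Set.notMem_empty _)⟩

lemma InV_subsingleton_set {P₀ : Type} [LinearOrder P₀] {S : Set P₀}
    (h : S.Subsingleton) : InV 0 ↥S (· < ·) :=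
  InV.zero _ _ h.coe_sort

lemma InV_union_main :
    ∀ (b : Ordinal) (σ : Type) (rσ : σ → σ → Prop), InV b σ rσ →
    ∀ (P₀ : Type) [inst : LinearOrder P₀] (P Qs : Set P₀) (α : Ordinal),
      InV α ↥P (· < ·) → ∀ (e : σ ≃ ↥Qs), (∀ x y, rσ x y ↔ (e x : P₀) < (e y : P₀)) →
      InV (α + b + (mOrd b : Ordinal)) ↥(P ∪ Qs) (· < ·) := by
  intro b σ rσ h
  induction h with
  | zero σ rσ hss =>
      intro P₀ inst P Qs α hP e he
      classical
      have hlvl : α + 0 + ((mOrd 0 : ℕ) : Ordinal) = α + 1 := by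
        rw [mOrd_zero]; simp
      rw [hlvl]
      have hα1 : α < α + 1 := by
        rw [Ordinal.add_one_eq_succ]; exact Order.lt_succ α
      have h01 : (0 : Ordinal) < α + 1 := lt_of_le_of_lt (zero_le : (0 : Ordinal) ≤ α) hα1
      have hQss : Subsingleton ↥Qs := Equiv.subsingleton e.symm
      rcases Qs.eq_empty_or_nonempty with hQe | ⟨q, hq⟩
      · -- Qs = ∅
        have hU : P ∪ Qs = ⋃ n : ℤ, (if n = 0 then P else ∅) := by
          rw [hQe]
          ext x
          simp only [Set.mem_union, Set.mem_iUnion, Set.mem_empty_iff_false, or_false]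
          constructor
          · intro hx; exact ⟨0, by simpa using hx⟩
          · rintro ⟨n, hn⟩
            by_cases h0 : n = 0
            · simpa [h0] using hn
            · simp [h0] at hn
        rw [hU]
        refine InV_iUnion _ _ (fun n => if n = 0 then α else 0) ?_ ?_ ?_
        · intro n; by_cases h0 : n = 0 <;> simp [h0, hα1, h01]
        · intro n; by_cases h0 : n = 0
          · rw [show (if n = 0 then P else (∅ : Set P₀)) = P from if_pos h0]
            show InV (if n = 0 then α else 0) ↥P (· < ·)
            rw [if_pos h0]; exact hP
          · rw [show (if n = 0 then P else (∅ : Set P₀)) = ∅ from if_neg h0]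
            show InV (if n = 0 then α else 0) ↥(∅ : Set P₀) (· < ·)
            rw [if_neg h0]; exact InV_empty
        · intro m n hmn x hx y hy
          by_cases hm : m = 0 <;> by_cases hn : n = 0 <;>
            simp [hm, hn] at hx hy <;> omega
      · -- Qs = {q}
        have hQq : ∀ y ∈ Qs, y = q := fun y hy =>
          congrArg Subtype.val (Subsingleton.elim (⟨y, hy⟩ : ↥Qs) ⟨q, hq⟩)
        set A : ℤ → Set P₀ := fun n =>
          if n = -1 then {p | p ∈ P ∧ p < q} else if n = 0 then {q}
          else if n = 1 then {p | p ∈ P ∧ q < p} else ∅ with hA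
        have hmem : ∀ n x, x ∈ A n →
            (n = -1 ∧ x ∈ P ∧ x < q) ∨ (n = 0 ∧ x = q) ∨ (n = 1 ∧ x ∈ P ∧ q < x) := by
          intro n x hx
          by_cases h1 : n = -1
          · left; exact ⟨h1, by simpa [hA, h1] using hx⟩
          · by_cases h2 : n = 0
            · right; left; exact ⟨h2, by simpa [hA, h1, h2] using hx⟩
            · by_cases h3 : n = 1
              · right; right; exact ⟨h3, by simpa [hA, h1, h2, h3] using hx⟩
              · simp [hA, h1, h2, h3] at hx
        have hU : P ∪ Qs = ⋃ n, A n := by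
          ext x
          constructor
          · intro hx
            rcases hx with hx | hx
            · rcases lt_trichotomy x q with hlt | rfl | hgt
              · exact Set.mem_iUnion.2 ⟨-1, by simp [hA]; exact ⟨hx, hlt⟩⟩
              · exact Set.mem_iUnion.2 ⟨0, by simp [hA]⟩
              · exact Set.mem_iUnion.2 ⟨1, by simp [hA]; exact ⟨hx, hgt⟩⟩
            · have := hQq x hx
              subst this
              exact Set.mem_iUnion.2 ⟨0, by simp [hA]⟩
          · intro hx
            obtain ⟨n, hn⟩ := Set.mem_iUnion.mp hx
            rcases hmem n x hn with ⟨_, hx, _⟩ | ⟨_, rfl⟩ | ⟨_, hx, _⟩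
            · exact Or.inl hx
            · exact Or.inr hq
            · exact Or.inl hx
        rw [hU]
        refine InV_iUnion _ _ (fun n => if n = 0 then 0 else α) ?_ ?_ ?_
        · intro n; by_cases h0 : n = 0 <;> simp [h0, hα1, h01]
        · intro n
          by_cases h1 : n = -1
          · have : A n = {p | p ∈ P ∧ p < q} := by simp [hA, h1]
            rw [this]
            simp only [h1]
            norm_num
            exact InV_subset (fun x hx => hx.1) hP
          · by_cases h2 : n = 0
            · have : A n = {q} := by simp [hA, h1, h2]
              rw [this, h2]
              simp only [if_true]
              exact InV_subsingleton_set Set.subsingleton_singleton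
            · by_cases h3 : n = 1
              · have : A n = {p | p ∈ P ∧ q < p} := by simp [hA, h1, h2, h3]
                rw [this]
                simp only [h2, if_false]
                exact InV_subset (fun x hx => hx.1) hP
              · have : A n = ∅ := by simp [hA, h1, h2, h3]
                rw [this]
                simp only [h2, if_false]
                exact InV_subset (fun x hx => absurd hx (Set.notMem_empty x)) hP
        · intro m n hmn x hx y hy
          rcases hmem m x hx with ⟨hm, hx1, hx2⟩ | ⟨hm, rfl⟩ | ⟨hm, hx1, hx2⟩ <;>
            rcases hmem n y hy with ⟨hn, hy1, hy2⟩ | ⟨hn, rfl⟩ | ⟨hn, hy1, hy2⟩ <;>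
              subst hm <;> subst hn <;> first
                | omega
                | assumption
                | exact hx2.trans hy2
                | exact hx2
                | exact hy2
  | sum a Qt rQ o ho h σ rσ e0 he0 IH =>
      intro P₀ inst P Qs α hP e he
      classical
      obtain ⟨k, hk⟩ : ∃ k, mOrd a = k + 1 := ⟨mOrd a - 1, by have := mOrd_pos a; omega⟩
      set E : (Σ n : ℤ, Qt n) ≃ ↥Qs := e0.trans e with hEdef
      have hE : ∀ x y, Sigma.Lex (· < ·) rQ x y ↔ ((E x : P₀) < (E y : P₀)) :=
        fun x y => (he0 x y).trans (he _ _)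
      set Qb : ℤ → Set P₀ := fun n => {z | ∃ y : Qt n, (E ⟨n, y⟩ : P₀) = z} with hQbdef
      have hQbsub : ∀ n, Qb n ⊆ Qs := by
        rintro n z ⟨y, rfl⟩; exact (E ⟨n, y⟩).2
      have hQbord : ∀ m n : ℤ, m < n → ∀ x ∈ Qb m, ∀ y ∈ Qb n, x < y := by
        rintro m n hmn _ ⟨u, rfl⟩ _ ⟨v, rfl⟩
        exact (hE ⟨m, u⟩ ⟨n, v⟩).mp (Sigma.Lex.left _ _ hmn)
      have hQcover : ∀ z, ∀ hz : z ∈ Qs, z ∈ Qb ((E.symm ⟨z, hz⟩).1) := by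
        intro z hz
        refine ⟨(E.symm ⟨z, hz⟩).2, ?_⟩
        show ((E ⟨(E.symm ⟨z, hz⟩).1, (E.symm ⟨z, hz⟩).2⟩ : ↥Qs) : P₀) = z
        rw [Sigma.eta, E.apply_symm_apply]
      set S : P₀ → Set ℤ := fun x => {n | ∃ z ∈ Qb n, z ≤ x} with hSdef
      set ix : P₀ → ℤ := fun x => sSup (S x) with hixdef
      set Pmid : Set P₀ :=
        {x | x ∈ P ∧ x ∉ Qs ∧ (∃ q ∈ Qs, q ≤ x) ∧ (∃ q ∈ Qs, x ≤ q)} with hPmiddef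
      have hSne : ∀ x ∈ Pmid, (S x).Nonempty := by
        rintro x ⟨_, _, ⟨q, hq, hqx⟩, _⟩
        exact ⟨(E.symm ⟨q, hq⟩).1, q, hQcover q hq, hqx⟩
      have hSbdd : ∀ x ∈ Pmid, BddAbove (S x) := by
        rintro x ⟨_, _, _, ⟨q2, hq2, hxq2⟩⟩
        refine ⟨(E.symm ⟨q2, hq2⟩).1, ?_⟩
        rintro n ⟨z, hz, hzx⟩
        by_contra hlt
        push_neg at hlt
        exact absurd ((hQbord _ n hlt q2 (hQcover q2 hq2) z hz).trans_le (hzx.trans hxq2))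
          (lt_irrefl q2)
      have hixmem : ∀ x ∈ Pmid, ix x ∈ S x := fun x hx =>
        Int.csSup_mem (hSne x hx) (hSbdd x hx)
      have hixub : ∀ x ∈ Pmid, ∀ n ∈ S x, n ≤ ix x := fun x hx n hn =>
        le_csSup (hSbdd x hx) hn
      set Pb : ℤ → Set P₀ := fun n => {x | x ∈ Pmid ∧ ix x = n} with hPbdef
      set R : ℤ → Set P₀ := fun n => Pb n ∪ Qb n with hRdef
      -- ordering of the R blocks
      have hRord : ∀ m n : ℤ, m < n → ∀ u ∈ R m, ∀ v ∈ R n, u < v := by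
        intro m n hmn u hu v hv
        rcases hv with hv | hv
        · -- v ∈ Pb n
          obtain ⟨z, hz, hzv⟩ : ∃ z ∈ Qb n, z ≤ v := by
            have := hixmem v hv.1
            rw [hv.2] at this
            exact this
          rcases hu with hu | hu
          · -- u ∈ Pb m
            by_contra hvu
            push_neg at hvu
            have h4 := hixub u hu.1 n ⟨z, hz, hzv.trans hvu⟩
            rw [hu.2] at h4
            omega
          · exact (hQbord m n hmn u hu z hz).trans_le hzv
        · -- v ∈ Qb n
          rcases hu with hu | hu
          · by_contra hvu
            push_neg at hvu
            have h4 := hixub u hu.1 n ⟨v, hv, hvu⟩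
            rw [hu.2] at h4
            omega
          · exact hQbord m n hmn u hu v hv
      -- rank of each R block
      have hRn : ∀ n, InV (α + o n + (mOrd (o n) : Ordinal)) ↥(R n) (· < ·) := by
        intro n
        have hPn : InV α ↥(Pb n) (· < ·) :=
          InV_subset (fun x hx => hx.1.1) hP
        have hbij : Function.Bijective
            (fun y : Qt n => (⟨(E ⟨n, y⟩ : P₀), ⟨y, rfl⟩⟩ : ↥(Qb n))) := by
          constructor
          · intro y z hyz
            have h1 : ((E ⟨n, y⟩ : ↥Qs) : P₀) = ((E ⟨n, z⟩ : ↥Qs) : P₀) := by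
              have := congrArg (fun t : ↥(Qb n) => (t : P₀)) hyz
              simpa using this
            have h2 : (⟨n, y⟩ : Σ n, Qt n) = ⟨n, z⟩ := E.injective (Subtype.ext h1)
            exact eq_of_heq (Sigma.mk.inj_iff.mp h2).2
          · rintro ⟨z, y, hy⟩
            exact ⟨y, Subtype.ext hy⟩
        have he_n : ∀ y z : Qt n, rQ n y z ↔
            (((Equiv.ofBijective _ hbij) y : P₀) < ((Equiv.ofBijective _ hbij) z : P₀)) := by
          intro y z
          show rQ n y z ↔ ((E ⟨n, y⟩ : P₀) < (E ⟨n, z⟩ : P₀))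
          rw [← hE]
          constructor
          · intro hr; exact Sigma.Lex.right _ _ hr
          · intro hl
            cases hl with
            | left _ _ h1 => exact absurd h1 (lt_irrefl n)
            | right _ _ h2 => exact h2
        exact IH n P₀ (Pb n) (Qb n) α hPn (Equiv.ofBijective _ hbij) he_n
      -- the middle part
      set M : Set P₀ := ⋃ n, R n with hMdef
      set d : Ordinal := α + a + (k : Ordinal) with hddef
      have hdlt : d < α + a + ((mOrd a : ℕ) : Ordinal) := by
        rw [hk]
        apply add_lt_add_right
        exact_mod_cast Nat.lt_succ_self k
      have hM : InV d ↥M (· < ·) := by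
        refine InV_iUnion R d (fun n => α + o n + (mOrd (o n) : Ordinal)) ?_ hRn hRord
        intro n
        have h1 : o n + (mOrd (o n) : Ordinal) < a + (k : Ordinal) :=
          keyLemma a (o n) (ho n) k hk
        calc α + o n + (mOrd (o n) : Ordinal) = α + (o n + (mOrd (o n) : Ordinal)) := by
              rw [add_assoc]
          _ < α + (a + (k : Ordinal)) := add_lt_add_right h1 α
          _ = d := by rw [hddef, add_assoc]
      -- the low and high parts
      set L : Set P₀ := {x | x ∈ P ∧ ∀ q ∈ Qs, x < q} with hLdef
      set H : Set P₀ := {x | x ∈ P ∧ Qs.Nonempty ∧ ∀ q ∈ Qs, q < x} with hHdef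
      have hL : InV α ↥L (· < ·) := InV_subset (fun x hx => hx.1) hP
      have hH : InV α ↥H (· < ·) := InV_subset (fun x hx => hx.1) hP
      have hMlo : ∀ y ∈ M, ∃ q ∈ Qs, q ≤ y := by
        intro y hy
        obtain ⟨n, hn⟩ := Set.mem_iUnion.mp hy
        rcases hn with hn | hn
        · obtain ⟨q, hq, hqy⟩ := hn.1.2.2.1
          exact ⟨q, hq, hqy⟩
        · exact ⟨y, hQbsub n hn, le_refl y⟩
      have hMhi : ∀ y ∈ M, ∃ q ∈ Qs, y ≤ q := by
        intro y hy
        obtain ⟨n, hn⟩ := Set.mem_iUnion.mp hy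
        rcases hn with hn | hn
        · obtain ⟨q, hq, hqy⟩ := hn.1.2.2.2
          exact ⟨q, hq, hqy⟩
        · exact ⟨y, hQbsub n hn, le_refl y⟩
      -- outer three-block union
      set B : ℤ → Set P₀ := fun n =>
        if n = -1 then L else if n = 0 then M else if n = 1 then H else ∅ with hBdef
      have hmemB : ∀ n x, x ∈ B n →
          (n = -1 ∧ x ∈ L) ∨ (n = 0 ∧ x ∈ M) ∨ (n = 1 ∧ x ∈ H) := by
        intro n x hx
        by_cases h1 : n = -1
        · left; exact ⟨h1, by simp only [hBdef] at hx; rwa [if_pos h1] at hx⟩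
        · by_cases h2 : n = 0
          · right; left; exact ⟨h2, by simp only [hBdef] at hx; rwa [if_neg h1, if_pos h2] at hx⟩
          · by_cases h3 : n = 1
            · right; right; exact ⟨h3, by simp only [hBdef] at hx; rwa [if_neg h1, if_neg h2, if_pos h3] at hx⟩
            · simp only [hBdef, if_neg h1, if_neg h2, if_neg h3] at hx
              exact absurd hx (Set.notMem_empty x)
      have hU : P ∪ Qs = ⋃ n, B n := by
        ext x
        constructor
        · intro hx
          by_cases hxQ : x ∈ Qs
          · refine Set.mem_iUnion.2 ⟨0, ?_⟩
            simp only [hBdef]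
            norm_num
            exact Set.mem_iUnion.2 ⟨(E.symm ⟨x, hxQ⟩).1, Or.inr (hQcover x hxQ)⟩
          · have hxP : x ∈ P := hx.resolve_right hxQ
            by_cases h1 : ∀ q ∈ Qs, x < q
            · refine Set.mem_iUnion.2 ⟨-1, ?_⟩
              simp only [hBdef]
              norm_num
              exact ⟨hxP, h1⟩
            · push_neg at h1
              obtain ⟨q1, hq1, hq1x⟩ := h1
              by_cases h2 : ∀ q ∈ Qs, q < x
              · refine Set.mem_iUnion.2 ⟨1, ?_⟩
                rw [hBdef]
                norm_num
                exact ⟨hxP, ⟨q1, hq1⟩, h2⟩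
              · push_neg at h2
                obtain ⟨q2, hq2, hxq2⟩ := h2
                have hxmid : x ∈ Pmid := ⟨hxP, hxQ, ⟨q1, hq1, hq1x⟩, ⟨q2, hq2, hxq2⟩⟩
                refine Set.mem_iUnion.2 ⟨0, ?_⟩
                rw [hBdef]
                norm_num
                exact Set.mem_iUnion.2 ⟨ix x, Or.inl ⟨hxmid, rfl⟩⟩
        · intro hx
          obtain ⟨n, hn⟩ := Set.mem_iUnion.mp hx
          rcases hmemB n x hn with ⟨_, hx1⟩ | ⟨_, hx1⟩ | ⟨_, hx1⟩
          · exact Or.inl hx1.1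
          · obtain ⟨n', hn'⟩ := Set.mem_iUnion.mp hx1
            rcases hn' with hn' | hn'
            · exact Or.inl hn'.1.1
            · exact Or.inr (hQbsub n' hn')
          · exact Or.inl hx1.1
      rw [hU]
      have hαlt : α < α + a + ((mOrd a : ℕ) : Ordinal) := by
        have h0 : (0 : Ordinal) < a + ((mOrd a : ℕ) : Ordinal) := by
          rw [hk]
          refine lt_of_lt_of_le ?_ (le_add_self)
          exact_mod_cast Nat.succ_pos k
        calc α = α + 0 := (add_zero α).symm
          _ < α + (a + ((mOrd a : ℕ) : Ordinal)) := add_lt_add_right h0 α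
          _ = α + a + ((mOrd a : ℕ) : Ordinal) := (add_assoc α a _).symm
      have h0lt : (0 : Ordinal) < α + a + ((mOrd a : ℕ) : Ordinal) :=
        lt_of_le_of_lt (zero_le : (0 : Ordinal) ≤ α) hαlt
      refine InV_iUnion B _ (fun n => if n = 0 then d else if n = -1 ∨ n = 1 then α else 0)
        ?_ ?_ ?_
      · intro n
        show (if n = 0 then d else if n = -1 ∨ n = 1 then α else 0)
          < α + a + ((mOrd a : ℕ) : Ordinal)
        by_cases h2 : n = 0
        · rw [if_pos h2]; exact hdlt
        · rw [if_neg h2]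
          by_cases h13 : n = -1 ∨ n = 1
          · rw [if_pos h13]; exact hαlt
          · rw [if_neg h13]; exact h0lt
      · intro n
        by_cases h1 : n = -1
        · rw [show B n = L from by simp [hBdef, h1]]
          show InV (if n = 0 then d else if n = -1 ∨ n = 1 then α else 0) ↥L (· < ·)
          rw [if_neg (by omega : ¬ n = 0), if_pos (Or.inl h1)]
          exact hL
        · by_cases h2 : n = 0
          · rw [show B n = M from by simp [hBdef, h1, h2]]
            show InV (if n = 0 then d else if n = -1 ∨ n = 1 then α else 0) ↥M (· < ·)
            rw [if_pos h2]
            exact hM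
          · by_cases h3 : n = 1
            · rw [show B n = H from by simp [hBdef, h1, h2, h3]]
              show InV (if n = 0 then d else if n = -1 ∨ n = 1 then α else 0) ↥H (· < ·)
              rw [if_neg h2, if_pos (Or.inr h3)]
              exact hH
            · rw [show B n = ∅ from by simp [hBdef, h1, h2, h3]]
              show InV (if n = 0 then d else if n = -1 ∨ n = 1 then α else 0)
                ↥(∅ : Set P₀) (· < ·)
              rw [if_neg h2, if_neg (by omega : ¬ (n = -1 ∨ n = 1))]
              exact InV_empty
      · intro m n hmn x hx y hy
        rcases hmemB m x hx with ⟨hm, hx1⟩ | ⟨hm, hx1⟩ | ⟨hm, hx1⟩ <;>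
          rcases hmemB n y hy with ⟨hn, hy1⟩ | ⟨hn, hy1⟩ | ⟨hn, hy1⟩ <;>
            subst hm <;> subst hn
        · omega
        · -- L < M
          obtain ⟨q, hq, hqy⟩ := hMlo y hy1
          exact (hx1.2 q hq).trans_le hqy
        · -- L < H
          obtain ⟨q, hq⟩ := hy1.2.1
          exact (hx1.2 q hq).trans (hy1.2.2 q hq)
        · omega
        · omega
        · -- M < H
          obtain ⟨q, hq, hxq⟩ := hMhi x hx1
          exact lt_of_le_of_lt hxq (hy1.2.2 q hq)
        · omega
        · omega
        · omega

section Hausdorff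

variable {P₀ : Type} [LinearOrder P₀]

/-- `(σ,r)` representable in the hierarchy. -/
def VRep (S : Set P₀) : Prop := ∃ a, InV a ↥S (· < ·)

lemma VRep_subset {S T : Set P₀} (hTS : T ⊆ S) (h : VRep S) : VRep T :=
  ⟨h.choose, InV_subset hTS h.choose_spec⟩

lemma VRep_subsingleton {S : Set P₀} (h : S.Subsingleton) : VRep S :=
  ⟨0, InV_subsingleton_set h⟩

lemma VRep_iUnion (A : ℤ → Set P₀) (h : ∀ n, VRep (A n))
    (hord : ∀ m n : ℤ, m < n → ∀ x ∈ A m, ∀ y ∈ A n, x < y) : VRep (⋃ n, A n) := by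
  choose o hos using h
  refine ⟨(⨆ n, o n) + 1, InV_iUnion A _ o ?_ hos hord⟩
  intro n
  have h1 : o n ≤ ⨆ n, o n := le_ciSup (Ordinal.bddAbove_range o) n
  have h2 : (⨆ n, o n) < (⨆ n, o n) + 1 := by
    rw [Ordinal.add_one_eq_succ]; exact Order.lt_succ _
  exact lt_of_le_of_lt h1 h2

lemma VRep_union2 {A B : Set P₀} (hA : VRep A) (hB : VRep B)
    (hord : ∀ x ∈ A, ∀ y ∈ B, x < y) : VRep (A ∪ B) := by
  classical
  have hU : A ∪ B = ⋃ n : ℤ, (if n = 0 then A else if n = 1 then B else ∅) := by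
    ext x
    simp only [Set.mem_union, Set.mem_iUnion]
    constructor
    · rintro (hx | hx)
      · exact ⟨0, by norm_num; exact hx⟩
      · exact ⟨1, by norm_num; exact hx⟩
    · rintro ⟨n, hn⟩
      by_cases h0 : n = 0
      · left; rwa [if_pos h0] at hn
      · by_cases h1 : n = 1
        · right; rwa [if_neg h0, if_pos h1] at hn
        · rw [if_neg h0, if_neg h1] at hn
          exact absurd hn (Set.notMem_empty x)
  rw [hU]
  refine VRep_iUnion _ ?_ ?_
  · intro n
    by_cases h0 : n = 0
    · rw [if_pos h0]; exact hA
    · by_cases h1 : n = 1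
      · rw [if_neg h0, if_pos h1]; exact hB
      · rw [if_neg h0, if_neg h1]; exact VRep_subsingleton Set.subsingleton_empty
  · intro m n hmn x hx y hy
    by_cases hm0 : m = 0 <;> by_cases hm1 : m = 1 <;> by_cases hn0 : n = 0 <;>
      by_cases hn1 : n = 1 <;>
        simp only [hm0, hm1, hn0, hn1, if_pos, if_neg, if_true, if_false] at hx hy <;>
          first
            | omega
            | exact hord x hx y hy
            | (exact absurd hx (Set.notMem_empty x))
            | (exact absurd hy (Set.notMem_empty y))
            | (simp at hx hy <;> first
                | (exact absurd hx (Set.notMem_empty x))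
                | (exact absurd hy (Set.notMem_empty y)))

lemma VRep_iUnion_nat (C : ℕ → Set P₀) (h : ∀ n, VRep (C n))
    (hord : ∀ m n : ℕ, m < n → ∀ x ∈ C m, ∀ y ∈ C n, x < y) : VRep (⋃ n, C n) := by
  classical
  have hU : (⋃ n, C n) = ⋃ n : ℤ, (if 0 ≤ n then C n.toNat else ∅) := by
    ext x
    simp only [Set.mem_iUnion]
    constructor
    · rintro ⟨n, hn⟩
      exact ⟨(n : ℤ), by rw [if_pos (Int.ofNat_nonneg n)]; simpa using hn⟩
    · rintro ⟨n, hn⟩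
      by_cases h0 : 0 ≤ n
      · exact ⟨n.toNat, by rwa [if_pos h0] at hn⟩
      · rw [if_neg h0] at hn
        exact absurd hn (Set.notMem_empty x)
  rw [hU]
  refine VRep_iUnion _ ?_ ?_
  · intro n
    by_cases h0 : 0 ≤ n
    · rw [if_pos h0]; exact h _
    · rw [if_neg h0]; exact VRep_subsingleton Set.subsingleton_empty
  · intro m n hmn x hx y hy
    by_cases hm : 0 ≤ m
    · rw [if_pos hm] at hx
      by_cases hn : 0 ≤ n
      · rw [if_pos hn] at hy
        exact hord m.toNat n.toNat (by omega) x hx y hy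
      · rw [if_neg hn] at hy; exact absurd hy (Set.notMem_empty y)
    · rw [if_neg hm] at hx; exact absurd hx (Set.notMem_empty x)

lemma VRep_iUnion_nat_rev (C : ℕ → Set P₀) (h : ∀ n, VRep (C n))
    (hord : ∀ m n : ℕ, m < n → ∀ x ∈ C m, ∀ y ∈ C n, y < x) : VRep (⋃ n, C n) := by
  classical
  have hU : (⋃ n, C n) = ⋃ n : ℤ, (if n ≤ 0 then C (-n).toNat else ∅) := by
    ext x
    simp only [Set.mem_iUnion]
    constructor
    · rintro ⟨n, hn⟩
      refine ⟨-(n : ℤ), ?_⟩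
      rw [if_pos (by omega : -(n:ℤ) ≤ 0)]
      simpa using hn
    · rintro ⟨n, hn⟩
      by_cases h0 : n ≤ 0
      · exact ⟨(-n).toNat, by rwa [if_pos h0] at hn⟩
      · rw [if_neg h0] at hn
        exact absurd hn (Set.notMem_empty x)
  rw [hU]
  refine VRep_iUnion _ ?_ ?_
  · intro n
    by_cases h0 : n ≤ 0
    · rw [if_pos h0]; exact h _
    · rw [if_neg h0]; exact VRep_subsingleton Set.subsingleton_empty
  · intro m n hmn x hx y hy
    by_cases hm : m ≤ 0
    · rw [if_pos hm] at hx
      by_cases hn : n ≤ 0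
      · rw [if_pos hn] at hy
        exact hord (-n).toNat (-m).toNat (by omega) y hy x hx
      · rw [if_neg hn] at hy; exact absurd hy (Set.notMem_empty y)
    · rw [if_neg hm] at hx; exact absurd hx (Set.notMem_empty x)

lemma VRep_chain_up [Countable P₀] (A : Set P₀)
    (h : ∀ w ∈ A, VRep {z | z ∈ A ∧ z ≤ w}) : VRep A := by
  classical
  rcases A.eq_empty_or_nonempty with rfl | hne
  · exact VRep_subsingleton Set.subsingleton_empty
  obtain ⟨f, hf⟩ := (Set.to_countable A).exists_eq_range hne
  have hfA : ∀ j, f j ∈ A := fun j => hf ▸ ⟨j, rfl⟩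
  set m : ℕ → P₀ := fun i => Nat.rec (f 0) (fun i mi => max mi (f (i + 1))) i with hm
  have hmsucc : ∀ i, m (i + 1) = max (m i) (f (i + 1)) := fun i => rfl
  have hmA : ∀ i, m i ∈ A := by
    intro i
    induction i with
    | zero => exact hfA 0
    | succ i ih =>
        rcases max_choice (m i) (f (i + 1)) with h1 | h1 <;> rw [hmsucc, h1]
        · exact ih
        · exact hfA (i + 1)
  have hmono : Monotone m := monotone_nat_of_le_succ (fun i => le_max_left _ _)
  have hcof : ∀ j, f j ≤ m j := by
    intro j
    cases j with
    | zero => exact le_refl _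
    | succ j => rw [hmsucc]; exact le_max_right _ _
  set C : ℕ → Set P₀ := fun i =>
    Nat.casesOn i {z | z ∈ A ∧ z ≤ m 0} (fun i' => {z | z ∈ A ∧ m i' < z ∧ z ≤ m (i' + 1)})
    with hC
  have hub : ∀ i, ∀ x ∈ C i, x ≤ m i := by
    intro i
    cases i with
    | zero => exact fun x hx => hx.2
    | succ i => exact fun x hx => hx.2.2
  have hCV : ∀ i, VRep (C i) := by
    intro i
    cases i with
    | zero => exact h (m 0) (hmA 0)
    | succ i =>
        refine VRep_subset ?_ (h (m (i + 1)) (hmA (i + 1)))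
        exact fun z hz => ⟨hz.1, hz.2.2⟩
  have hCord : ∀ i j : ℕ, i < j → ∀ x ∈ C i, ∀ y ∈ C j, x < y := by
    intro i j hij x hx y hy
    obtain ⟨j', rfl⟩ : ∃ j', j = j' + 1 := ⟨j - 1, by omega⟩
    have h1 : m j' < y := hy.2.1
    have h2 : x ≤ m i := hub i x hx
    exact lt_of_le_of_lt (h2.trans (hmono (by omega : i ≤ j'))) h1
  have hU : A = ⋃ i, C i := by
    ext z
    constructor
    · intro hz
      obtain ⟨j, rfl⟩ : ∃ j, f j = z := Set.mem_range.mp (hf ▸ hz)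
      have hex : ∃ i, f j ≤ m i := ⟨j, hcof j⟩
      set i := Nat.find hex with hi
      have hle : f j ≤ m i := Nat.find_spec hex
      refine Set.mem_iUnion.2 ⟨i, ?_⟩
      match i, hi with
      | 0, hi => exact ⟨hz, hi ▸ hle⟩
      | (i' + 1), hi =>
          refine ⟨hz, ?_, hi ▸ hle⟩
          have hmin := Nat.find_min hex (show i' < Nat.find hex by omega)
          exact lt_of_not_ge hmin
    · intro hz
      obtain ⟨i, hi⟩ := Set.mem_iUnion.mp hz
      cases i with
      | zero => exact hi.1
      | succ i => exact hi.1
  rw [hU]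
  exact VRep_iUnion_nat C hCV hCord

lemma VRep_chain_down [Countable P₀] (A : Set P₀)
    (h : ∀ w ∈ A, VRep {z | z ∈ A ∧ w ≤ z}) : VRep A := by
  classical
  rcases A.eq_empty_or_nonempty with rfl | hne
  · exact VRep_subsingleton Set.subsingleton_empty
  obtain ⟨f, hf⟩ := (Set.to_countable A).exists_eq_range hne
  have hfA : ∀ j, f j ∈ A := fun j => hf ▸ ⟨j, rfl⟩
  set m : ℕ → P₀ := fun i => Nat.rec (f 0) (fun i mi => min mi (f (i + 1))) i with hm
  have hmsucc : ∀ i, m (i + 1) = min (m i) (f (i + 1)) := fun i => rfl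
  have hmA : ∀ i, m i ∈ A := by
    intro i
    induction i with
    | zero => exact hfA 0
    | succ i ih =>
        rcases min_choice (m i) (f (i + 1)) with h1 | h1 <;> rw [hmsucc, h1]
        · exact ih
        · exact hfA (i + 1)
  have hmono : ∀ i j : ℕ, i ≤ j → m j ≤ m i := by
    intro i j hij
    induction j with
    | zero => have : i = 0 := by omega
              rw [this]
    | succ j ih =>
        rcases Nat.lt_or_ge i (j + 1) with h1 | h1
        · exact le_trans (by rw [hmsucc]; exact min_le_left _ _) (ih (by omega))
        · have : i = j + 1 := by omega
          rw [this]
  have hcof : ∀ j, m j ≤ f j := by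
    intro j
    cases j with
    | zero => exact le_refl _
    | succ j => rw [hmsucc]; exact min_le_right _ _
  set C : ℕ → Set P₀ := fun i =>
    Nat.casesOn i {z | z ∈ A ∧ m 0 ≤ z} (fun i' => {z | z ∈ A ∧ z < m i' ∧ m (i' + 1) ≤ z})
    with hC
  have hub : ∀ i, ∀ x ∈ C i, m i ≤ x := by
    intro i
    cases i with
    | zero => exact fun x hx => hx.2
    | succ i => exact fun x hx => hx.2.2
  have hCV : ∀ i, VRep (C i) := by
    intro i
    cases i with
    | zero => exact h (m 0) (hmA 0)
    | succ i =>
        refine VRep_subset ?_ (h (m (i + 1)) (hmA (i + 1)))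
        exact fun z hz => ⟨hz.1, hz.2.2⟩
  have hCord : ∀ i j : ℕ, i < j → ∀ x ∈ C i, ∀ y ∈ C j, y < x := by
    intro i j hij x hx y hy
    obtain ⟨j', rfl⟩ : ∃ j', j = j' + 1 := ⟨j - 1, by omega⟩
    have h1 : y < m j' := hy.2.1
    have h2 : m i ≤ x := hub i x hx
    exact lt_of_lt_of_le h1 ((hmono i j' (by omega)).trans h2)
  have hU : A = ⋃ i, C i := by
    ext z
    constructor
    · intro hz
      obtain ⟨j, rfl⟩ : ∃ j, f j = z := Set.mem_range.mp (hf ▸ hz)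
      have hex : ∃ i, m i ≤ f j := ⟨j, hcof j⟩
      set i := Nat.find hex with hi
      have hle : m i ≤ f j := Nat.find_spec hex
      refine Set.mem_iUnion.2 ⟨i, ?_⟩
      match i, hi with
      | 0, hi => exact ⟨hz, hi ▸ hle⟩
      | (i' + 1), hi =>
          refine ⟨hz, ?_, hi ▸ hle⟩
          have hmin := Nat.find_min hex (show i' < Nat.find hex by omega)
          exact lt_of_not_ge hmin
    · intro hz
      obtain ⟨i, hi⟩ := Set.mem_iUnion.mp hz
      cases i with
      | zero => exact hi.1
      | succ i => exact hi.1
  rw [hU]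
  exact VRep_iUnion_nat_rev C hCV hCord

lemma exists_InV [Countable P₀] (P : Set P₀) (hP : ScatteredRel ↥P (· < ·)) :
    VRep P := by
  classical
  by_contra hV
  set E : P₀ → P₀ → Prop := fun x y => VRep (P ∩ Set.uIcc x y) with hEd
  have hErefl : ∀ x, E x x := by
    intro x
    refine VRep_subsingleton ?_
    rw [Set.uIcc_self]
    exact Set.subsingleton_singleton.anti Set.inter_subset_right
  have hEsymm : ∀ {x y}, E x y → E y x := by
    intro x y h
    rwa [hEd, Set.uIcc_comm] at h
  have hEtrans_aux : ∀ x y z, x ≤ z → E x y → E y z → E x z := by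
    intro x y z hxz hxy hyz
    rcases le_total y x with hyx | hxy' 
    · refine VRep_subset ?_ hyz
      rintro w ⟨hwP, hw⟩
      rw [Set.uIcc_of_le hxz] at hw
      exact ⟨hwP, by rw [Set.uIcc_of_le (hyx.trans hxz)]; exact ⟨hyx.trans hw.1, hw.2⟩⟩
    · rcases le_total z y with hzy | hyz'
      · refine VRep_subset ?_ hxy
        rintro w ⟨hwP, hw⟩
        rw [Set.uIcc_of_le hxz] at hw
        exact ⟨hwP, by rw [Set.uIcc_of_le hxy']; exact ⟨hw.1, hw.2.trans hzy⟩⟩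
      · have hA : VRep (P ∩ Set.Icc x y) := by
          refine VRep_subset ?_ hxy
          rintro w ⟨hwP, hw⟩
          exact ⟨hwP, by rw [Set.uIcc_of_le hxy']; exact hw⟩
        have hB : VRep {w | w ∈ P ∧ y < w ∧ w ≤ z} := by
          refine VRep_subset ?_ hyz
          rintro w ⟨hwP, hw1, hw2⟩
          exact ⟨hwP, by rw [Set.uIcc_of_le hyz']; exact ⟨hw1.le, hw2⟩⟩
        have hAB := VRep_union2 hA hB
          (fun u hu v hv => lt_of_le_of_lt hu.2.2 hv.2.1)
        refine VRep_subset ?_ hAB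
        rintro w ⟨hwP, hw⟩
        rw [Set.uIcc_of_le hxz] at hw
        rcases le_or_gt w y with h1 | h1
        · exact Or.inl ⟨hwP, hw.1, h1⟩
        · exact Or.inr ⟨hwP, h1, hw.2⟩
  have hEtrans : ∀ {x y z}, E x y → E y z → E x z := by
    intro x y z hxy hyz
    rcases le_total x z with h | h
    · exact hEtrans_aux x y z h hxy hyz
    · exact hEsymm (hEtrans_aux z y x h (hEsymm hyz) (hEsymm hxy))
  have hcross : ∀ x x' y y', E x x' → E y y' → x < y → ¬ E x y → x' < y' := by
    intro x x' y y' hxx hyy hxy hnE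
    by_contra hle
    push_neg at hle
    apply hnE
    rcases le_total y' x with h1 | h1
    · refine VRep_subset ?_ hyy
      rintro w ⟨hwP, hw⟩
      rw [Set.uIcc_of_le hxy.le] at hw
      refine ⟨hwP, ?_⟩
      rw [Set.uIcc_comm, Set.uIcc_of_le (h1.trans hxy.le)]
      exact ⟨h1.trans hw.1, hw.2⟩
    · rcases le_total y x' with h2 | h2
      · refine VRep_subset ?_ hxx
        rintro w ⟨hwP, hw⟩
        rw [Set.uIcc_of_le hxy.le] at hw
        refine ⟨hwP, ?_⟩
        rw [Set.uIcc_of_le (hxy.le.trans h2)]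
        exact ⟨hw.1, hw.2.trans h2⟩
      · -- x ≤ y' ≤ x' ≤ y
        have hxx' : x ≤ x' := h1.trans hle
        have hA : VRep (P ∩ Set.Icc x x') := by
          refine VRep_subset ?_ hxx
          rintro w ⟨hwP, hw⟩
          exact ⟨hwP, by rw [Set.uIcc_of_le hxx']; exact hw⟩
        have hB : VRep {w | w ∈ P ∧ x' < w ∧ w ≤ y} := by
          refine VRep_subset ?_ hyy
          rintro w ⟨hwP, hw1, hw2⟩
          refine ⟨hwP, ?_⟩
          rw [Set.uIcc_comm, Set.uIcc_of_le ((hle.trans hw1.le).trans hw2)]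
          exact ⟨hle.trans hw1.le, hw2⟩
        have hAB := VRep_union2 hA hB
          (fun u hu v hv => lt_of_le_of_lt hu.2.2 hv.2.1)
        refine VRep_subset ?_ hAB
        rintro w ⟨hwP, hw⟩
        rw [Set.uIcc_of_le hxy.le] at hw
        rcases le_or_gt w x' with hc | hc
        · exact Or.inl ⟨hwP, hw.1, hc⟩
        · exact Or.inr ⟨hwP, hc, hw.2⟩
  have hdense : ∀ a b, a ∈ P → b ∈ P → a < b → ¬ E a b →
      ∃ w, w ∈ P ∧ a < w ∧ w < b ∧ ¬ E a w ∧ ¬ E w b := by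
    intro a b haP hbP hab hnE
    by_contra hno
    push_neg at hno
    have hkey : ∀ w ∈ P, a ≤ w → w ≤ b → (E a w ∨ E w b) := by
      intro w hwP haw hwb
      rcases eq_or_lt_of_le haw with heq | haw'
      · rw [← heq]; exact Or.inl (hErefl a)
      · rcases eq_or_lt_of_le hwb with heq | hwb'
        · rw [heq]; exact Or.inr (hErefl b)
        · by_cases h1 : E a w
          · exact Or.inl h1
          · exact Or.inr (hno w hwP haw' hwb' h1)
    apply hnE
    set A : Set P₀ := {w | w ∈ P ∧ a ≤ w ∧ w ≤ b ∧ E a w} with hAd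
    set B : Set P₀ := {w | w ∈ P ∧ a ≤ w ∧ w ≤ b ∧ ¬ E a w} with hBd
    have hBE : ∀ w ∈ B, E w b := fun w hw =>
      (hkey w hw.1 hw.2.1 hw.2.2.1).resolve_left hw.2.2.2
    have hA : VRep A := by
      refine VRep_chain_up A ?_
      intro w hw
      refine VRep_subset ?_ hw.2.2.2
      rintro z ⟨hzA, hzw⟩
      exact ⟨hzA.1, by rw [Set.uIcc_of_le hw.2.1]; exact ⟨hzA.2.1, hzw⟩⟩
    have hB : VRep B := by
      refine VRep_chain_down B ?_
      intro w hw
      refine VRep_subset ?_ (hBE w hw)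
      rintro z ⟨hzB, hwz⟩
      exact ⟨hzB.1, by rw [Set.uIcc_of_le hw.2.2.1]; exact ⟨hwz, hzB.2.2.1⟩⟩
    have hAB := VRep_union2 hA hB (by
      intro u hu v hv
      exact hcross a u b v hu.2.2.2 (hEsymm (hBE v hv)) hab hnE)
    refine VRep_subset ?_ hAB
    rintro w ⟨hwP, hw⟩
    rw [Set.uIcc_of_le hab.le] at hw
    by_cases h1 : E a w
    · exact Or.inl ⟨hwP, hw.1, hw.2, h1⟩
    · exact Or.inr ⟨hwP, hw.1, hw.2, h1⟩
  by_cases hall : ∀ x ∈ P, ∀ y ∈ P, E x y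
  · apply hV
    rcases P.eq_empty_or_nonempty with rfl | ⟨x0, hx0⟩
    · exact VRep_subsingleton Set.subsingleton_empty
    set Pu : Set P₀ := {w | w ∈ P ∧ x0 ≤ w} with hPud
    set Pd : Set P₀ := {w | w ∈ P ∧ w < x0} with hPdd
    have hPu : VRep Pu := by
      refine VRep_chain_up Pu ?_
      intro w hw
      refine VRep_subset ?_ (hall x0 hx0 w hw.1)
      rintro z ⟨hz, hzw⟩
      exact ⟨hz.1, by rw [Set.uIcc_of_le hw.2]; exact ⟨hz.2, hzw⟩⟩
    have hPd : VRep Pd := by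
      refine VRep_chain_down Pd ?_
      intro w hw
      refine VRep_subset ?_ (hall w hw.1 x0 hx0)
      rintro z ⟨hz, hwz⟩
      exact ⟨hz.1, by rw [Set.uIcc_of_le hw.2.le]; exact ⟨hwz, hz.2.le⟩⟩
    have hU : P = Pd ∪ Pu := by
      ext w
      constructor
      · intro hw
        rcases le_or_gt x0 w with h | h
        · exact Or.inr ⟨hw, h⟩
        · exact Or.inl ⟨hw, h⟩
      · rintro (hw | hw) <;> exact hw.1
    rw [hU]
    exact VRep_union2 hPd hPu (fun u hu v hv => lt_of_lt_of_le hu.2 hv.2)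
  · push_neg at hall
    obtain ⟨x1, hx1, y1, hy1, hnE1⟩ := hall
    set sd : Setoid ↥P := ⟨fun u v => E u.1 v.1,
      ⟨fun u => hErefl u.1, fun h => hEsymm h, fun h1 h2 => hEtrans h1 h2⟩⟩ with hsd
    set S : Set ↥P := Set.range (fun q : Quotient sd => q.out) with hSd
    have hrep : ∀ u : ↥P, E (((Quotient.mk sd u).out).1) u.1 := fun u =>
      Quotient.mk_out u
    apply hP
    have hpair : ∀ u v : ↥P, (u : P₀) < v → ¬ E u.1 v.1 →
        ((Quotient.mk sd u).out : P₀) < ((Quotient.mk sd v).out : P₀) := by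
      intro u v huv hnE2
      exact hcross u.1 ((Quotient.mk sd u).out).1 v.1 ((Quotient.mk sd v).out).1
        (hEsymm (hrep u)) (hEsymm (hrep v)) huv hnE2
    refine ⟨S, ?_, ?_⟩
    · -- two comparable elements
      have hne : x1 ≠ y1 := by
        rintro rfl
        exact hnE1 (hErefl x1)
      rcases hne.lt_or_gt with h | h
      · exact ⟨(Quotient.mk sd ⟨x1, hx1⟩).out, ⟨_, rfl⟩,
          (Quotient.mk sd ⟨y1, hy1⟩).out, ⟨_, rfl⟩,
          hpair ⟨x1, hx1⟩ ⟨y1, hy1⟩ h hnE1⟩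
      · exact ⟨(Quotient.mk sd ⟨y1, hy1⟩).out, ⟨_, rfl⟩,
          (Quotient.mk sd ⟨x1, hx1⟩).out, ⟨_, rfl⟩,
          hpair ⟨y1, hy1⟩ ⟨x1, hx1⟩ h (fun h2 => hnE1 (hEsymm h2))⟩
    · -- density
      rintro u hu v hv huv
      obtain ⟨qu, rfl⟩ := hu
      obtain ⟨qv, rfl⟩ := hv
      have hnE2 : ¬ E (qu.out).1 (qv.out).1 := by
        intro hE2
        have hq : qu = qv := by
          rw [← Quotient.out_eq qu, ← Quotient.out_eq qv]
          exact Quotient.sound hE2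
        rw [hq] at huv
        exact lt_irrefl _ huv
      obtain ⟨w, hwP, h1, h2, h3, h4⟩ :=
        hdense (qu.out).1 (qv.out).1 (qu.out).2 (qv.out).2 huv hnE2
      refine ⟨(Quotient.mk sd ⟨w, hwP⟩).out, ⟨_, rfl⟩, ?_, ?_⟩
      · exact hcross (qu.out).1 (qu.out).1 w ((Quotient.mk sd ⟨w, hwP⟩).out).1
          (hErefl _) (hEsymm (hrep ⟨w, hwP⟩)) h1 h3
      · exact hcross w ((Quotient.mk sd ⟨w, hwP⟩).out).1 (qv.out).1 (qv.out).1
          (hEsymm (hrep ⟨w, hwP⟩)) (hErefl _) h2 h4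

end Hausdorff

/-- If `P, Q ⊆ P₀` are scattered suborderings with Hausdorff ranks `α` and `β`,
then `r(P ∪ Q) ≤ min (α + β + m_β) (β + α + m_α)`. -/
theorem hrank_union_le (P₀ : Type) [LinearOrder P₀] [Countable P₀] (P Q : Set P₀)
    (hP : ScatteredRel ↥P (· < ·)) (hQ : ScatteredRel ↥Q (· < ·))
    (α β : Ordinal.{0}) (hα : hrank ↥P (· < ·) = α) (hβ : hrank ↥Q (· < ·) = β) :
    hrank ↥(P ∪ Q) (· < ·) ≤
      min (α + β + (mOrd β : Ordinal)) (β + α + (mOrd α : Ordinal)) := by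
  have hPex : {a | InV a ↥P (· < ·)}.Nonempty := exists_InV P hP
  have hQex : {a | InV a ↥Q (· < ·)}.Nonempty := exists_InV Q hQ
  have hαm : InV α ↥P (· < ·) := by
    rw [← hα]; exact csInf_mem hPex
  have hβm : InV β ↥Q (· < ·) := by
    rw [← hβ]; exact csInf_mem hQex
  have h1 : InV (α + β + (mOrd β : Ordinal)) ↥(P ∪ Q) (· < ·) :=
    InV_union_main β ↥Q (· < ·) hβm P₀ P Q α hαm (Equiv.refl _) (fun x y => Iff.rfl)
  have h2 : InV (β + α + (mOrd α : Ordinal)) ↥(Q ∪ P) (· < ·) :=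
    InV_union_main α ↥P (· < ·) hαm P₀ Q P β hβm (Equiv.refl _) (fun x y => Iff.rfl)
  rw [Set.union_comm Q P] at h2
  refine le_min (csInf_le ⟨0, fun x _ => (zero_le : (0 : Ordinal) ≤ x)⟩ h1)
    (csInf_le ⟨0, fun x _ => (zero_le : (0 : Ordinal) ≤ x)⟩ h2)
end
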